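/- arXiv:2012.03982 — 3 statements merged into one kernel-verified Lean document; each statement's English description precedes it below -/
import Mathlib

section
/- Let G be a profinite group, X a profinite G-space (compact, Hausdorff, totally disconnected with continuous G-action), and p : E → X a G-equivariant local homeomorphism. Let s : U → E be a continuous section of p over an open set U, and let V ⊆ U be a compact open subset. Then there exists an open normal subgroup N of G such that V is N-invariant, s(V) is N-invariant, and s(ny) = n·s(y) for all y ∈ V and n ∈ N. -/
open Pointwise

/-- Let a profinite group `G` act continuously on a profinite space `X` and a space `E`,
with `p : E → X` a `G`-equivariant local homeomorphism. If `s` is a continuous section of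
`p` over an open set `U` and `V ⊆ U` is compact open, then there is an open normal subgroup
`N` of `G` such that `V` and `s(V)` are `N`-invariant and `s` is `N`-equivariant on `V`. -/
theorem section_locally_subequivariant
    {G E X : Type*} [Group G] [TopologicalSpace G] [IsTopologicalGroup G]
    [CompactSpace G] [T2Space G] [TotallyDisconnectedSpace G]
    [TopologicalSpace X] [CompactSpace X] [T2Space X] [TotallyDisconnectedSpace X]
    [TopologicalSpace E]
    [MulAction G E] [ContinuousSMul G E] [MulAction G X] [ContinuousSMul G X]
    (p : E → X) (hp : IsLocalHomeomorph p)
    (heq : ∀ (g : G) (e : E), p (g • e) = g • p e)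
    (U : Set X) (hU : IsOpen U) (s : X → E)
    (hs : ContinuousOn s U) (hsec : ∀ y ∈ U, p (s y) = y)
    (V : Set X) (hVU : V ⊆ U) (hVc : IsCompact V) (hVo : IsOpen V) :
    ∃ N : Subgroup G, N.Normal ∧ IsOpen (N : Set G) ∧
      (∀ n ∈ N, n • V = V) ∧
      (∀ n ∈ N, n • (s '' V) = s '' V) ∧
      ∀ y ∈ V, ∀ n ∈ N, s (n • y) = n • s y := by
  -- the two candidate sections over pairs (g, y)
  set t₁ : G × X → E := fun q => s (q.1 • q.2) with ht₁
  set t₂ : G × X → E := fun q => q.1 • s q.2 with ht₂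
  set O : Set (G × X) := {q | q.2 ∈ V ∧ q.1 • q.2 ∈ V} with hO
  have hact : Continuous fun q : G × X => q.1 • q.2 :=
    continuous_fst.smul continuous_snd
  have hOopen : IsOpen O := by
    apply IsOpen.inter
    · exact hVo.preimage continuous_snd
    · exact hVo.preimage hact
  have ht₁c : ContinuousOn t₁ O := by
    apply hs.comp hact.continuousOn
    intro q hq
    exact hVU hq.2
  have ht₂c : ContinuousOn t₂ O :=
    continuous_fst.continuousOn.smul (hs.comp continuous_snd.continuousOn
      fun q hq => hVU hq.1)
  have hpt : ∀ q ∈ O, p (t₁ q) = p (t₂ q) := by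
    intro q hq
    have h1 : p (t₁ q) = q.1 • q.2 := hsec _ (hVU hq.2)
    have h2 : p (t₂ q) = q.1 • q.2 := by
      rw [ht₂, heq, hsec _ (hVU hq.1)]
    rw [h1, h2]
  set W : Set (G × X) := {q | q ∈ O ∧ t₁ q = t₂ q} with hW
  have hWopen : IsOpen W := by
    rw [isOpen_iff_mem_nhds]
    rintro q ⟨hqO, hqeq⟩
    obtain ⟨φ, hφ, rfl⟩ := hp (t₁ q)
    have hA1 : IsOpen (O ∩ t₁ ⁻¹' φ.source) :=
      ht₁c.isOpen_inter_preimage hOopen φ.open_source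
    have hA2 : IsOpen (O ∩ t₂ ⁻¹' φ.source) :=
      ht₂c.isOpen_inter_preimage hOopen φ.open_source
    have hqA : q ∈ (O ∩ t₁ ⁻¹' φ.source) ∩ (O ∩ t₂ ⁻¹' φ.source) :=
      ⟨⟨hqO, hφ⟩, hqO, by rw [Set.mem_preimage, ← hqeq]; exact hφ⟩
    refine Filter.mem_of_superset (((hA1.inter hA2)).mem_nhds hqA) ?_
    rintro r ⟨⟨hrO, hr1⟩, -, hr2⟩
    exact ⟨hrO, φ.injOn hr1 hr2 (hpt r hrO)⟩
  have h1V : ({1} : Set G) ×ˢ V ⊆ W := by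
    rintro ⟨g, y⟩ ⟨hg, hy⟩
    rcases hg with rfl
    refine ⟨⟨hy, by simpa using hy⟩, ?_⟩
    simp [ht₁, ht₂, one_smul]
  obtain ⟨Ωg, Ωv, hΩgo, -, h1Ωg, hVΩv, hsub⟩ :=
    generalized_tube_lemma isCompact_singleton hVc hWopen h1V
  obtain ⟨C, hCclopen, h1C, hCΩ⟩ :=
    compact_exists_isClopen_in_isOpen hΩgo (h1Ωg rfl)
  obtain ⟨N, hN⟩ :=
    IsTopologicalGroup.exist_openNormalSubgroup_sub_clopen_nhds_of_one hCclopen h1C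
  have key : ∀ n ∈ N.toSubgroup, ∀ y ∈ V, n • y ∈ V ∧ s (n • y) = n • s y := by
    intro n hn y hy
    have : (n, y) ∈ W := hsub ⟨hCΩ (hN hn), hVΩv hy⟩
    exact ⟨this.1.2, this.2⟩
  refine ⟨N.toSubgroup, N.isNormal', N.toOpenSubgroup.isOpen, ?_, ?_, ?_⟩
  · intro n hn
    apply le_antisymm
    · rintro _ ⟨y, hy, rfl⟩
      exact (key n hn y hy).1
    · intro y hy
      refine ⟨n⁻¹ • y, (key n⁻¹ (N.toSubgroup.inv_mem hn) y hy).1, by simp⟩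
  · intro n hn
    apply le_antisymm
    · rintro _ ⟨_, ⟨y, hy, rfl⟩, rfl⟩
      exact ⟨n • y, (key n hn y hy).1, (key n hn y hy).2⟩
    · rintro _ ⟨y, hy, rfl⟩
      have h := key n⁻¹ (N.toSubgroup.inv_mem hn) y hy
      exact ⟨s (n⁻¹ • y), ⟨n⁻¹ • y, h.1, rfl⟩, by rw [h.2]; simp⟩
  · intro y hy n hn
    exact (key n hn y hy).2
end

section
/- Let G be a profinite group, X a profinite G-space, and p : E → X a G-equivariant local homeomorphism. For U a compact open subset of X, the set Γ(U, E) of continuous sections of p over U, with the stab_G(U)-action (g ∗ s)(v) = g·s(g⁻¹v), is a discrete stab_G(U)-set: every section is fixed by an open subgroup of stab_G(U). -/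
open Pointwise Topology

/-- Let a profinite group `G` act continuously on a profinite space `X` and a space `E`,
with `p : E → X` a `G`-equivariant local homeomorphism. For `U` a compact open subset of
`X`, the set of continuous sections of `p` over `U` is a discrete `stab_G(U)`-set: every
section is fixed by an open subgroup of `stab_G(U)` (under `(g ∗ s)(v) = g • s(g⁻¹ • v)`). -/
theorem sections_discrete_stabilizer_set
    {G E X : Type*} [Group G] [TopologicalSpace G] [IsTopologicalGroup G]
    [CompactSpace G] [T2Space G] [TotallyDisconnectedSpace G]
    [TopologicalSpace X] [CompactSpace X] [T2Space X] [TotallyDisconnectedSpace X]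
    [TopologicalSpace E]
    [MulAction G E] [ContinuousSMul G E] [MulAction G X] [ContinuousSMul G X]
    (p : E → X) (hp : IsLocalHomeomorph p)
    (heq : ∀ (g : G) (e : E), p (g • e) = g • p e)
    (U : Set X) (hUc : IsCompact U) (hUo : IsOpen U)
    (s : X → E) (hs : ContinuousOn s U) (hsec : ∀ y ∈ U, p (s y) = y) :
    ∃ N : Subgroup G, IsOpen (N : Set G) ∧ N ≤ MulAction.stabilizer G U ∧
      ∀ n ∈ N, ∀ v ∈ U, n • s (n⁻¹ • v) = s v := by
  -- Step 1: local statement at each point of U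
  have key : ∀ v ∈ U, ∃ (O : Set G) (W : Set X), IsOpen O ∧ IsOpen W ∧ (1 : G) ∈ O ∧ v ∈ W ∧
      (∀ g ∈ O, ∀ w ∈ W, g⁻¹ • w ∈ U) ∧
      (∀ g ∈ O, ∀ w ∈ W, w ∈ U → g • s (g⁻¹ • w) = s w) := by
    intro v hv
    obtain ⟨e, hmem, rfl⟩ := hp (s v)
    -- `T` : the set where the translated section is defined
    have hT : IsOpen {q : G × X | q.1⁻¹ • q.2 ∈ U} :=
      hUo.preimage (by fun_prop)
    -- the translated section is continuous on `T`
    have hΦ : ContinuousOn (fun q : G × X => q.1 • s (q.1⁻¹ • q.2))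
        {q : G × X | q.1⁻¹ • q.2 ∈ U} := by
      apply ContinuousOn.smul continuousOn_fst
      exact hs.comp (Continuous.continuousOn (by fun_prop)) (fun q hq => hq)
    -- the preimage of `e.source` under the translated section is open, and contains (1, v)
    have hA : IsOpen ({q : G × X | q.1⁻¹ • q.2 ∈ U} ∩
        (fun q : G × X => q.1 • s (q.1⁻¹ • q.2)) ⁻¹' e.source) :=
      hΦ.isOpen_inter_preimage hT e.open_source
    have h1v : ((1 : G), v) ∈ {q : G × X | q.1⁻¹ • q.2 ∈ U} ∩
        (fun q : G × X => q.1 • s (q.1⁻¹ • q.2)) ⁻¹' e.source := by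
      constructor
      · show (1 : G)⁻¹ • v ∈ U
        simpa using hv
      · show (1 : G) • s ((1 : G)⁻¹ • v) ∈ e.source
        simpa using hmem
    obtain ⟨O, W, hOo, hWo, hO1, hvW, hOW⟩ := isOpen_prod_iff.1 hA 1 v h1v
    -- shrink `W` so that `s` maps `W ∩ U` into `e.source`
    obtain ⟨W', hW'mem, hW'o, hW's⟩ :
        ∃ W' ∈ 𝓝 v, IsOpen W' ∧ W' ∩ U ⊆ s ⁻¹' e.source := by
      have := Filter.mem_map.1 (hs v hv (e.open_source.mem_nhds hmem))
      rw [mem_nhdsWithin] at this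
      obtain ⟨W', hW'o, hvW', hW'⟩ := this
      exact ⟨W', hW'o.mem_nhds hvW', hW'o, hW'⟩
    refine ⟨O, W ∩ W', hOo, hWo.inter hW'o, hO1, ⟨hvW, mem_of_mem_nhds hW'mem⟩, ?_, ?_⟩
    · intro g hg w hw
      exact (hOW (Set.mk_mem_prod hg hw.1)).1
    · intro g hg w hw hwU
      have hmemT : g⁻¹ • w ∈ U := (hOW (Set.mk_mem_prod hg hw.1)).1
      have hΦV : g • s (g⁻¹ • w) ∈ e.source := (hOW (Set.mk_mem_prod hg hw.1)).2
      have hsV : s w ∈ e.source := hW's ⟨hw.2, hwU⟩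
      apply e.injOn hΦV hsV
      show (e : E → X) (g • s (g⁻¹ • w)) = (e : E → X) (s w)
      rw [heq, hsec _ hmemT, hsec _ hwU, smul_inv_smul]
  choose O W hOo hWo hO1 hvW h1 h2 using key
  -- Step 2: compactness — a single open neighbourhood of 1 works for all of U
  obtain ⟨t, ht⟩ := hUc.elim_nhds_subcover' (fun v hv => W v hv)
    (fun v hv => (hWo v hv).mem_nhds (hvW v hv))
  set O' : Set G := ⋂ x ∈ t, O x x.2 with hO'
  have hO'o : IsOpen O' := isOpen_biInter_finset fun x _ => hOo x x.2
  have hO'1 : (1 : G) ∈ O' := Set.mem_iInter₂.2 fun x _ => hO1 x x.2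
  have P : ∀ g ∈ O', ∀ v ∈ U, g⁻¹ • v ∈ U ∧ g • s (g⁻¹ • v) = s v := by
    intro g hg v hv
    obtain ⟨x, hxt, hvW⟩ := Set.mem_iUnion₂.1 (ht hv)
    have hgO : g ∈ O x x.2 := Set.mem_iInter₂.1 hg x hxt
    exact ⟨h1 x x.2 g hgO v hvW, h2 x x.2 g hgO v hvW hv⟩
  -- Step 3: find an open normal subgroup inside O'
  obtain ⟨K, hKc, hK1, hKO⟩ := compact_exists_isClopen_in_isOpen hO'o hO'1
  obtain ⟨H, hH⟩ :=
    IsTopologicalGroup.exist_openNormalSubgroup_sub_clopen_nhds_of_one hKc hK1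
  have hsub : (H : Set G) ⊆ O' := fun g hg => hKO (hH hg)
  refine ⟨H.toSubgroup, H.isOpen, ?_, ?_⟩
  · intro n hn
    have hnO : n ∈ O' := hsub hn
    have hninvO : n⁻¹ ∈ O' := hsub (inv_mem hn)
    rw [MulAction.mem_stabilizer_iff]
    apply subset_antisymm
    · rintro _ ⟨u, hu, rfl⟩
      simpa using (P n⁻¹ hninvO u hu).1
    · intro u hu
      exact ⟨n⁻¹ • u, (P n hnO u hu).1, smul_inv_smul n u⟩
  · intro n hn v hv
    exact (P n (hsub hn) v hv).2
end

section
/- Let G be a profinite group, L a closed subgroup and K a closed subgroup such that L is not conjugate in G to any subgroup of K. Then there exists an open normal subgroup N of G such that the fixed-point set (G/NK)^L (for the left translation action of L on the finite coset space G/NK) is empty. -/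
/-- In a profinite group, an element lying in `N ⊔ K` for every open normal subgroup `N`
lies in `K`, provided `K` is closed. -/
lemma mem_of_forall_mem_sup_openNormal
    {G : Type*} [Group G] [TopologicalSpace G] [IsTopologicalGroup G]
    [CompactSpace G] [T2Space G] [TotallyDisconnectedSpace G]
    (K : Subgroup G) (hK : IsClosed (K : Set G)) (x : G)
    (hx : ∀ N : OpenNormalSubgroup G, x ∈ (N : Subgroup G) ⊔ K) : x ∈ K := by
  by_contra hxK
  -- the coset xK is closed and does not contain 1
  have hclosed : IsClosed ((x * ·) '' (K : Set G)) :=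
    (Homeomorph.mulLeft x).isClosedMap _ hK
  have h1 : (1 : G) ∈ ((x * ·) '' (K : Set G))ᶜ := by
    rintro ⟨k, hk, hk1⟩
    exact hxK (by
      have : x = k⁻¹ := eq_inv_of_mul_eq_one_left hk1
      rw [this]; exact K.inv_mem hk)
  obtain ⟨V, hV, h1V, hVsub⟩ :=
    compact_exists_isClopen_in_isOpen hclosed.isOpen_compl h1
  obtain ⟨H, hH⟩ :=
    IsTopologicalGroup.exist_openNormalSubgroup_sub_clopen_nhds_of_one hV h1V
  have hxH := hx H
  have : (H : Subgroup G).Normal := H.isNormal'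
  rw [← SetLike.mem_coe, Subgroup.normal_mul] at hxH
  obtain ⟨n, hn, k, hk, hnk⟩ := hxH
  have hnmem : n ∈ (x * ·) '' (K : Set G) :=
    ⟨k⁻¹, K.inv_mem hk, by rw [← hnk]; group⟩
  exact (hVsub (hH hn)) hnmem

/-- Let `G` be profinite and `L`, `K` closed subgroups such that `L` is not conjugate in
`G` to any subgroup of `K`. Then there is an open normal subgroup `N` of `G` such that the
`L`-fixed points of the finite coset space `G/NK` (with `NK = N ⊔ K`) are empty. -/
theorem exists_open_normal_fixed_points_empty
    {G : Type*} [Group G] [TopologicalSpace G] [IsTopologicalGroup G]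
    [CompactSpace G] [T2Space G] [TotallyDisconnectedSpace G]
    (L K : Subgroup G) (hL : IsClosed (L : Set G)) (hK : IsClosed (K : Set G))
    (h : ∀ g : G, ¬ Subgroup.map (MulAut.conj g).toMonoidHom L ≤ K) :
    ∃ N : Subgroup G, N.Normal ∧ IsOpen (N : Set G) ∧
      ∀ y : G ⧸ (N ⊔ K), ∃ l ∈ L, l • y ≠ y := by
  -- it suffices to find an open normal `N` with no `g` whose coset is fixed
  suffices hsuff : ∃ N : OpenNormalSubgroup G,
      ∀ g : G, ∃ l ∈ L, g⁻¹ * l * g ∉ (N : Subgroup G) ⊔ K by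
    obtain ⟨N, hN⟩ := hsuff
    refine ⟨N, N.isNormal', N.isOpen, ?_⟩
    intro y
    induction y using QuotientGroup.induction_on with
    | H g =>
      obtain ⟨l, hl, hlg⟩ := hN g
      refine ⟨l, hl, fun heq => hlg ?_⟩
      have : (l * g)⁻¹ * g ∈ (N : Subgroup G) ⊔ K := (QuotientGroup.eq).mp heq
      have h2 := ((N : Subgroup G) ⊔ K).inv_mem this
      simpa [mul_assoc] using h2
  by_contra hcon
  push_neg at hcon
  -- the sets of `g` giving a fixed coset, for each open normal `N`
  set C : OpenNormalSubgroup G → Set G :=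
    fun N => {g : G | ∀ l ∈ L, g⁻¹ * l * g ∈ (N : Subgroup G) ⊔ K} with hC
  have hCclosed : ∀ N, IsClosed (C N) := by
    intro N
    have : C N = ⋂ l ∈ L, (fun g : G => g⁻¹ * l * g) ⁻¹'
        (((N : Subgroup G) ⊔ K : Subgroup G) : Set G) := by
      ext g; simp [hC]
    rw [this]
    have hNK : IsClosed ((((N : Subgroup G) ⊔ K : Subgroup G)) : Set G) :=
      Subgroup.isClosed_of_isOpen _ (Subgroup.isOpen_mono le_sup_left N.isOpen)
    exact isClosed_biInter fun l _ => hNK.preimage (by fun_prop)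
  have hCne : ∀ N, (C N).Nonempty := fun N => hcon N
  have hdir : Directed (· ⊇ ·) C := by
    intro N1 N2
    refine ⟨N1 ⊓ N2, fun g hg l hl => ?_, fun g hg l hl => ?_⟩
    · exact sup_le_sup_right inf_le_left K (hg l hl)
    · exact sup_le_sup_right inf_le_right K (hg l hl)
  have : Nonempty (OpenNormalSubgroup G) := ⟨⟨⊤, inferInstanceAs (⊤ : Subgroup G).Normal⟩⟩
  obtain ⟨g, hg⟩ := IsCompact.nonempty_iInter_of_directed_nonempty_isCompact_isClosed
    C hdir hCne (fun N => (hCclosed N).isCompact) hCclosed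
  simp only [Set.mem_iInter] at hg
  refine h g⁻¹ ?_
  rintro x ⟨l, hl, rfl⟩
  have : ∀ N : OpenNormalSubgroup G, g⁻¹ * l * g ∈ (N : Subgroup G) ⊔ K :=
    fun N => hg N l hl
  have := mem_of_forall_mem_sup_openNormal K hK _ this
  simpa [MulAut.conj] using this
end
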